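/- arXiv:math-ph/0104003 — 4 statements merged into one kernel-verified Lean document; each statement's English description precedes it below -/
import Mathlib

section
/- Let ρ be a Schwartz function on ℝ with ∫_ℝ ρ(s) ds = 1, and for ε > 0 set ρ_ε(s) = ρ(s/ε)/ε. Fix real numbers x > 0 and γ > 0, set t̄ = −x(1 − 1/γ), and define the regularized correlation c_ε(t) = (1/(γε)) ∫_ℝ ρ(s) · conj( ρ( s + (t − t̄)/ε ) ) ds. Then c_ε converges in the sense of distributions to (1/γ)·δ_{t̄} as ε → 0⁺; that is, for every smooth compactly supported test function φ on ℝ, ∫_ℝ φ(t) c_ε(t) dt → (1/γ) φ(t̄). In particular, the limit is independent of the choice of mollifier ρ. -/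
open MeasureTheory Filter Topology

/-- The regularized correlation of two delta waves converges, in the sense of
distributions, to `(1/γ) δ_{t̄}` with `t̄ = -x(1 - 1/γ)`, independently of the mollifier `ρ`. -/
theorem regularized_correlation_tendsto_dirac
    (ρ : SchwartzMap ℝ ℂ) (hρ : ∫ s : ℝ, ρ s = 1)
    (x γ : ℝ) (hx : 0 < x) (hγ : 0 < γ)
    (tbar : ℝ) (htbar : tbar = -x * (1 - 1 / γ))
    (c : ℝ → ℝ → ℂ)
    (hc : ∀ ε t : ℝ, c ε t = ((1 / (γ * ε) : ℝ) : ℂ) *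
      ∫ s : ℝ, ρ s * (starRingEnd ℂ) (ρ (s + (t - tbar) / ε)))
    (φ : ℝ → ℂ) (hφ : ContDiff ℝ (⊤ : ℕ∞) φ) (hφc : HasCompactSupport φ) :
    Tendsto (fun ε : ℝ => ∫ t : ℝ, φ t * c ε t) (𝓝[>] (0 : ℝ))
      (𝓝 (((1 / γ : ℝ) : ℂ) * φ tbar)) := by
  have hφcont : Continuous φ := hφ.continuous
  obtain ⟨Cφ, hCφ⟩ := hφc.exists_bound_of_continuous hφcont
  have hCφ0 : 0 ≤ Cφ := le_trans (norm_nonneg _) (hCφ 0)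
  set M : ℝ := SchwartzMap.seminorm ℝ 0 0 ρ with hM
  have hMρ : ∀ s : ℝ, ‖ρ s‖ ≤ M := fun s => ρ.norm_le_seminorm ℝ s
  have hρint : Integrable (fun s : ℝ => ρ s) volume := ρ.integrable
  have hφint : Integrable φ volume := hφcont.integrable_of_hasCompactSupport hφc
  -- the key product integral
  set G : ℝ → ℂ := fun ε =>
    ∫ p : ℝ × ℝ, ρ p.1 * (φ (tbar + ε * (p.2 - p.1)) * (starRingEnd ℂ) (ρ p.2)) with hGdef
  -- continuity of the integrands
  have contG : ∀ ε : ℝ, Continuous fun p : ℝ × ℝ =>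
      ρ p.1 * (φ (tbar + ε * (p.2 - p.1)) * (starRingEnd ℂ) (ρ p.2)) := by
    intro ε
    exact (ρ.continuous.comp continuous_fst).mul
      (((hφcont.comp (continuous_const.add
        (continuous_const.mul (continuous_snd.sub continuous_fst)))).mul
        (Complex.continuous_conj.comp (ρ.continuous.comp continuous_snd))))
  -- the dominating bound for G
  have hbound_int : Integrable (fun p : ℝ × ℝ => ‖ρ p.1‖ * (Cφ * ‖ρ p.2‖))
      (volume.prod volume) :=
    hρint.norm.mul_prod (hρint.norm.const_mul Cφ)
  have hbound : ∀ (ε : ℝ) (p : ℝ × ℝ),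
      ‖ρ p.1 * (φ (tbar + ε * (p.2 - p.1)) * (starRingEnd ℂ) (ρ p.2))‖ ≤
        ‖ρ p.1‖ * (Cφ * ‖ρ p.2‖) := by
    intro ε p
    rw [norm_mul, norm_mul, RCLike.norm_conj]
    gcongr
    exact hCφ _
  -- integrability of the G integrand
  have hGint : ∀ ε : ℝ, Integrable
      (fun p : ℝ × ℝ => ρ p.1 * (φ (tbar + ε * (p.2 - p.1)) * (starRingEnd ℂ) (ρ p.2)))
      (volume.prod volume) := by
    intro ε
    exact hbound_int.mono' ((contG ε).aestronglyMeasurable)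
      (Filter.Eventually.of_forall fun p => hbound ε p)
  -- Step B : G tends to φ tbar
  have hGlim : Tendsto G (𝓝[>] (0 : ℝ)) (𝓝 (φ tbar)) := by
    have key : Tendsto G (𝓝[>] (0 : ℝ))
        (𝓝 (∫ p : ℝ × ℝ, ρ p.1 * (φ tbar * (starRingEnd ℂ) (ρ p.2)))) := by
      apply tendsto_integral_filter_of_dominated_convergence
        (fun p : ℝ × ℝ => ‖ρ p.1‖ * (Cφ * ‖ρ p.2‖))
      · exact Filter.Eventually.of_forall fun ε => (contG ε).aestronglyMeasurable
      · exact Filter.Eventually.of_forall fun ε =>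
          Filter.Eventually.of_forall fun p => hbound ε p
      · exact hbound_int
      · refine Filter.Eventually.of_forall fun p => ?_
        have h1 : Tendsto (fun ε : ℝ => tbar + ε * (p.2 - p.1)) (𝓝[>] (0 : ℝ)) (𝓝 tbar) := by
          have : Tendsto (fun ε : ℝ => tbar + ε * (p.2 - p.1)) (𝓝 (0 : ℝ))
              (𝓝 (tbar + 0 * (p.2 - p.1))) :=
            (continuous_const.add (continuous_id.mul continuous_const)).tendsto 0
          simpa using this.mono_left nhdsWithin_le_nhds
        have h2 : Tendsto (fun ε : ℝ => φ (tbar + ε * (p.2 - p.1))) (𝓝[>] (0 : ℝ))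
            (𝓝 (φ tbar)) := (hφcont.tendsto tbar).comp h1
        exact ((h2.mul_const ((starRingEnd ℂ) (ρ p.2))).const_mul (ρ p.1))
    have heval : (∫ p : ℝ × ℝ, ρ p.1 * (φ tbar * (starRingEnd ℂ) (ρ p.2))) = φ tbar := by
      rw [MeasureTheory.Measure.volume_eq_prod, MeasureTheory.integral_prod_mul (fun s : ℝ => ρ s)
        (fun u : ℝ => φ tbar * (starRingEnd ℂ) (ρ u)), hρ, integral_const_mul,
        integral_conj, hρ]
      simp
    rwa [heval] at key
  -- Step A : for ε > 0, the LHS equals (1/γ) * G ε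
  have hA : ∀ ε : ℝ, 0 < ε →
      (∫ t : ℝ, φ t * c ε t) = ((1 / γ : ℝ) : ℂ) * G ε := by
    intro ε hε
    have hε' : (ε : ℝ) ≠ 0 := ne_of_gt hε
    -- integrand for the swap
    have hHint : Integrable
        (fun p : ℝ × ℝ => φ p.1 * (ρ p.2 * (starRingEnd ℂ) (ρ (p.2 + (p.1 - tbar) / ε))))
        (volume.prod volume) := by
      have hcont : Continuous fun p : ℝ × ℝ =>
          φ p.1 * (ρ p.2 * (starRingEnd ℂ) (ρ (p.2 + (p.1 - tbar) / ε))) := by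
        exact (hφcont.comp continuous_fst).mul
          ((ρ.continuous.comp continuous_snd).mul
            (Complex.continuous_conj.comp (ρ.continuous.comp
              (continuous_snd.add ((continuous_fst.sub continuous_const).div_const ε)))))
      have hdom : Integrable (fun p : ℝ × ℝ => ‖φ p.1‖ * (‖ρ p.2‖ * M))
          (volume.prod volume) :=
        hφint.norm.mul_prod (hρint.norm.mul_const M)
      refine hdom.mono' hcont.aestronglyMeasurable
        (Filter.Eventually.of_forall fun p => ?_)
      rw [norm_mul, norm_mul, RCLike.norm_conj]
      gcongr
      exact hMρ _
    calc (∫ t : ℝ, φ t * c ε t)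
        = ∫ t : ℝ, ((1 / (γ * ε) : ℝ) : ℂ) *
            ∫ s : ℝ, φ t * (ρ s * (starRingEnd ℂ) (ρ (s + (t - tbar) / ε))) := by
          congr 1; funext t
          rw [hc ε t, MeasureTheory.integral_const_mul]
          ring
      _ = ((1 / (γ * ε) : ℝ) : ℂ) *
            ∫ t : ℝ, ∫ s : ℝ, φ t * (ρ s * (starRingEnd ℂ) (ρ (s + (t - tbar) / ε))) := by
          rw [MeasureTheory.integral_const_mul]
      _ = ((1 / (γ * ε) : ℝ) : ℂ) *
            ∫ s : ℝ, ∫ t : ℝ, φ t * (ρ s * (starRingEnd ℂ) (ρ (s + (t - tbar) / ε))) := by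
          rw [MeasureTheory.integral_integral_swap hHint]
      _ = ((1 / (γ * ε) : ℝ) : ℂ) *
            ∫ s : ℝ, ρ s * ∫ t : ℝ, φ t * (starRingEnd ℂ) (ρ (s + (t - tbar) / ε)) := by
          congr 1
          refine integral_congr_ae (Filter.Eventually.of_forall fun s => ?_)
          simp only
          rw [← MeasureTheory.integral_const_mul]
          exact integral_congr_ae (Filter.Eventually.of_forall fun t => by ring)
      _ = ((1 / (γ * ε) : ℝ) : ℂ) *
            ∫ s : ℝ, ρ s * ((ε : ℂ) *
              ∫ u : ℝ, φ (tbar + ε * (u - s)) * (starRingEnd ℂ) (ρ u)) := by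
          congr 1
          refine integral_congr_ae (Filter.Eventually.of_forall fun s => ?_)
          simp only
          congr 1
          -- substitution in the inner integral
          set g : ℝ → ℂ := fun v => φ (tbar + ε * v) * (starRingEnd ℂ) (ρ (s + v)) with hg
          have e1 : (fun t : ℝ => φ t * (starRingEnd ℂ) (ρ (s + (t - tbar) / ε))) =
              fun t : ℝ => g ((t - tbar) / ε) := by
            funext t
            simp only [hg]
            congr 2
            field_simp
            ring
          rw [e1]
          have e2 : (∫ t : ℝ, g ((t - tbar) / ε)) = ∫ t : ℝ, g (t / ε) :=
            integral_sub_right_eq_self (μ := volume) (fun t : ℝ => g (t / ε)) tbar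
          rw [e2, MeasureTheory.Measure.integral_comp_div g ε, abs_of_pos hε]
          have e3 : (∫ v : ℝ, g v) = ∫ u : ℝ, φ (tbar + ε * (u - s)) * (starRingEnd ℂ) (ρ u) := by
            rw [show (∫ u : ℝ, φ (tbar + ε * (u - s)) * (starRingEnd ℂ) (ρ u)) =
                ∫ v : ℝ, φ (tbar + ε * v) * (starRingEnd ℂ) (ρ (s + v)) from ?_]
            have := integral_sub_right_eq_self (μ := volume)
              (fun v : ℝ => φ (tbar + ε * v) * (starRingEnd ℂ) (ρ (s + v))) s
            rw [← this]
            refine integral_congr_ae (Filter.Eventually.of_forall fun u => ?_)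
            congr 2
            ring
          rw [e3, Complex.real_smul]
      _ = ((1 / γ : ℝ) : ℂ) *
            ∫ s : ℝ, ρ s * ∫ u : ℝ, φ (tbar + ε * (u - s)) * (starRingEnd ℂ) (ρ u) := by
          rw [show (fun s : ℝ => ρ s * ((ε : ℂ) *
              ∫ u : ℝ, φ (tbar + ε * (u - s)) * (starRingEnd ℂ) (ρ u))) =
              fun s : ℝ => (ε : ℂ) * (ρ s *
              ∫ u : ℝ, φ (tbar + ε * (u - s)) * (starRingEnd ℂ) (ρ u)) from
            funext fun s => by ring, MeasureTheory.integral_const_mul, ← mul_assoc]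
          congr 1
          have hεC : (ε : ℂ) ≠ 0 := Complex.ofReal_ne_zero.mpr hε'
          have hγC : (γ : ℂ) ≠ 0 := Complex.ofReal_ne_zero.mpr (ne_of_gt hγ)
          push_cast
          field_simp
      _ = ((1 / γ : ℝ) : ℂ) * G ε := by
          congr 1
          rw [hGdef]
          simp only
          rw [MeasureTheory.Measure.volume_eq_prod,
            ← MeasureTheory.integral_integral (f := fun s u : ℝ =>
            ρ s * (φ (tbar + ε * (u - s)) * (starRingEnd ℂ) (ρ u))) (hGint ε)]
          refine integral_congr_ae (Filter.Eventually.of_forall fun s => ?_)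
          simp only
          rw [MeasureTheory.integral_const_mul]
  -- conclude
  have : Tendsto (fun ε : ℝ => ((1 / γ : ℝ) : ℂ) * G ε) (𝓝[>] (0 : ℝ))
      (𝓝 (((1 / γ : ℝ) : ℂ) * φ tbar)) := hGlim.const_mul _
  refine this.congr' ?_
  filter_upwards [self_mem_nhdsWithin] with ε hε
  exact (hA ε hε).symm
end

section
/- Fix γ > 0 and let χ: ℝ → ℝ be smooth, even, identically 0 on a neighborhood of 0 and identically 1 for |ξ| ≥ 1. Define a(ξ,η) = χ(ξ)χ(η/γ)/(γ|ξ||η|) (extended by 0 where the numerator vanishes). Then for every Schwartz function φ on ℝ, the function (ξ,η) ↦ a(ξ,η) · 𝓕φ(|η| − |ξ|) belongs to L¹(ℝ²). -/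
open MeasureTheory

/-- The amplitude `a(ξ,η) = χ(ξ)χ(η/γ)/(γ|ξ||η|)` (which extends by `0` where the
numerator vanishes, since `χ` vanishes near `0`). -/
noncomputable def amp (γ : ℝ) (χ : ℝ → ℝ) (ξ η : ℝ) : ℝ :=
  χ ξ * χ (η / γ) / (γ * |ξ| * |η|)

/-- Fourier transform with the convention `𝓕φ(τ) = ∫ e^{-isτ} φ(s) ds`. -/
noncomputable def FT (φ : ℝ → ℂ) (τ : ℝ) : ℂ :=
  ∫ s : ℝ, Complex.exp (-(Complex.I * (s : ℂ) * (τ : ℂ))) * φ s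

namespace AmpAux

/-- The basic integrable decay profile. -/
noncomputable def g (x : ℝ) : ℝ := (1 + x ^ 2)⁻¹

lemma g_pos (x : ℝ) : 0 < g x := by unfold g; positivity

lemma g_int : Integrable g := integrable_inv_one_add_sq

lemma g_sq (x y : ℝ) (h : x ^ 2 = y ^ 2) : g x = g y := by unfold g; rw [h]

/-- `g(|η|-|ξ|) ≤ g(η-ξ) + g(η+ξ)`. -/
lemma g_abs_le (ξ η : ℝ) : g (|η| - |ξ|) ≤ g (η - ξ) + g (η + ξ) := by
  have h : (|η| - |ξ|) ^ 2 = (η - ξ) ^ 2 ∨ (|η| - |ξ|) ^ 2 = (η + ξ) ^ 2 := by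
    rcases abs_cases η with ⟨h1, _⟩ | ⟨h1, _⟩ <;> rcases abs_cases ξ with ⟨h2, _⟩ | ⟨h2, _⟩
    · exact Or.inl (by rw [h1, h2])
    · exact Or.inr (by rw [h1, h2]; ring)
    · exact Or.inr (by rw [h1, h2]; ring)
    · exact Or.inl (by rw [h1, h2]; ring)
  rcases h with h | h
  · rw [g_sq _ _ h]; exact le_add_of_nonneg_right (g_pos _).le
  · rw [g_sq _ _ h]; exact le_add_of_nonneg_left (g_pos _).le

/-- For `0 < ε ≤ a`, `(a²)⁻¹ ≤ (1 + ε⁻²) g a`. -/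
lemma inv_sq_le {ε a : ℝ} (hε : 0 < ε) (ha : ε ≤ a) :
    (a ^ 2)⁻¹ ≤ (1 + (ε ^ 2)⁻¹) * g a := by
  have ha0 : 0 < a := hε.trans_le ha
  unfold g
  rw [← one_div (a ^ 2), ← one_div (1 + a ^ 2), mul_one_div,
    div_le_div_iff₀ (by positivity) (by positivity)]
  have hεa : ε ^ 2 ≤ a ^ 2 := by nlinarith
  have h1 : (ε ^ 2)⁻¹ * ε ^ 2 = 1 := inv_mul_cancel₀ (by positivity)
  have h2 : (ε ^ 2)⁻¹ * ε ^ 2 ≤ (ε ^ 2)⁻¹ * a ^ 2 :=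
    mul_le_mul_of_nonneg_left hεa (by positivity)
  nlinarith

/-- AM–GM style bound: `(a*b)⁻¹ ≤ (a²)⁻¹ + (b²)⁻¹` for `a, b > 0`. -/
lemma inv_mul_le {a b : ℝ} (ha : 0 < a) (hb : 0 < b) :
    (a * b)⁻¹ ≤ (a ^ 2)⁻¹ + (b ^ 2)⁻¹ := by
  have h := sq_nonneg (a⁻¹ - b⁻¹)
  have : (a * b)⁻¹ = a⁻¹ * b⁻¹ := mul_inv a b
  rw [this, ← inv_pow, ← inv_pow]
  nlinarith [sq_nonneg (a⁻¹ - b⁻¹)]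

lemma shear1 : Integrable (fun p : ℝ × ℝ => g p.1 * g (p.2 - p.1)) := by
  have h : Integrable (fun z : ℝ × ℝ => g z.1 * g z.2)
      ((volume : Measure ℝ).prod (volume : Measure ℝ)) :=
    g_int.mul_prod g_int
  have hmp : MeasurePreserving (fun z : ℝ × ℝ => (z.1, z.2 - z.1))
      ((volume : Measure ℝ).prod volume) ((volume : Measure ℝ).prod volume) :=
    measurePreserving_prod_sub volume volume
  have := (hmp.integrable_comp h.1).mpr h
  rw [← Measure.volume_eq_prod] at this
  exact this

lemma shear2 : Integrable (fun p : ℝ × ℝ => g p.1 * g (p.2 + p.1)) := by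
  have h : Integrable (fun z : ℝ × ℝ => g z.1 * g z.2)
      ((volume : Measure ℝ).prod (volume : Measure ℝ)) :=
    g_int.mul_prod g_int
  have hmp : MeasurePreserving (fun z : ℝ × ℝ => (z.1, z.1 + z.2))
      ((volume : Measure ℝ).prod volume) ((volume : Measure ℝ).prod volume) :=
    measurePreserving_prod_add volume volume
  have h2 := (hmp.integrable_comp h.1).mpr h
  rw [← Measure.volume_eq_prod] at h2
  exact h2.congr (Filter.Eventually.of_forall fun p => by
    simp only [Function.comp]
    rw [add_comm p.1 p.2])

lemma shear3 : Integrable (fun p : ℝ × ℝ => g p.2 * g (p.2 - p.1)) := by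
  have hmp : MeasurePreserving (Prod.swap : ℝ × ℝ → ℝ × ℝ) volume volume := by
    rw [Measure.volume_eq_prod]; exact Measure.measurePreserving_swap
  have h := (hmp.integrable_comp shear1.1).mpr shear1
  exact h.congr (Filter.Eventually.of_forall fun p => by
    simp only [Function.comp, Prod.swap]
    rw [g_sq (p.1 - p.2) (p.2 - p.1) (by ring)])

lemma shear4 : Integrable (fun p : ℝ × ℝ => g p.2 * g (p.2 + p.1)) := by
  have hmp : MeasurePreserving (Prod.swap : ℝ × ℝ → ℝ × ℝ) volume volume := by
    rw [Measure.volume_eq_prod]; exact Measure.measurePreserving_swap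
  have h := (hmp.integrable_comp shear2.1).mpr shear2
  exact h.congr (Filter.Eventually.of_forall fun p => by
    simp only [Function.comp, Prod.swap]
    rw [add_comm p.1 p.2])

/-- Integrability of the dominating function. -/
lemma dom_int (K : ℝ) :
    Integrable (fun p : ℝ × ℝ =>
      K * ((g p.1 + g p.2) * (g (p.2 - p.1) + g (p.2 + p.1)))) := by
  have h := (((shear1.add shear2).add shear3).add shear4).const_mul K
  exact h.congr (Filter.Eventually.of_forall fun p => by simp only [Pi.add_apply]; ring)

end AmpAux

open AmpAux in
/-- For every Schwartz function `φ`, the function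
`(ξ,η) ↦ a(ξ,η) 𝓕φ(|η| - |ξ|)` is in `L¹(ℝ²)`. -/
theorem amplitude_times_fourier_integrable (γ : ℝ) (hγ : 0 < γ) (χ : ℝ → ℝ)
    (hχ : ContDiff ℝ (⊤ : ℕ∞) χ) (hχeven : ∀ ξ : ℝ, χ (-ξ) = χ ξ)
    (hχ0 : ∃ δ > (0 : ℝ), ∀ ξ : ℝ, |ξ| < δ → χ ξ = 0)
    (hχ1 : ∀ ξ : ℝ, 1 ≤ |ξ| → χ ξ = 1)
    (φ : SchwartzMap ℝ ℂ) :
    Integrable (fun p : ℝ × ℝ =>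
      ((amp γ χ p.1 p.2 : ℝ) : ℂ) * FT (⇑φ) (|p.2| - |p.1|)) := by
  obtain ⟨δ, hδ, h0⟩ := hχ0
  -- a positive lower bound for `|ξ|` and `|η|` on the support of the amplitude
  set ε : ℝ := min δ (γ * δ) with hε_def
  have hε : 0 < ε := lt_min hδ (by positivity)
  -- a uniform bound for `χ`
  obtain ⟨M₀, hM₀⟩ := isCompact_Icc.exists_bound_of_continuousOn
    (s := Set.Icc (-1 : ℝ) 1) hχ.continuous.continuousOn
  set M : ℝ := max M₀ 1 with hM_def
  have hM1 : (1 : ℝ) ≤ M := le_max_right _ _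
  have hM : ∀ x : ℝ, |χ x| ≤ M := by
    intro x
    by_cases hx : |x| ≤ 1
    · have : x ∈ Set.Icc (-1 : ℝ) 1 := abs_le.mp hx
      exact (hM₀ x this).trans (le_max_left _ _)
    · rw [hχ1 x (le_of_not_ge hx)]
      simpa using hM1
  -- relate `FT φ` to the Schwartz Fourier transform
  set ψ : SchwartzMap ℝ ℂ := FourierTransform.fourier φ with hψ_def
  have hπ : (0 : ℝ) < Real.pi := Real.pi_pos
  have hFTeq : ∀ τ : ℝ, FT (⇑φ) τ = ψ (τ / (2 * Real.pi)) := by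
    intro τ
    have : ψ (τ / (2 * Real.pi)) = FourierTransform.fourier (⇑φ) (τ / (2 * Real.pi)) := by
      rw [hψ_def, SchwartzMap.fourier_coe]
    rw [this, Real.fourier_real_eq_integral_exp_smul]
    unfold FT
    congr 1
    funext s
    rw [smul_eq_mul]
    congr 1
    have hr : -2 * Real.pi * s * (τ / (2 * Real.pi)) = -(s * τ) := by
      field_simp
    rw [hr]
    push_cast
    ring
  have hψcont : Continuous (FT (⇑φ)) := by
    have : (FT (⇑φ)) = fun τ => ψ (τ / (2 * Real.pi)) := funext hFTeq
    rw [this]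
    exact ψ.continuous.comp (continuous_id.div_const _)
  -- decay bound for `FT φ`
  obtain ⟨C₀, hC₀pos, hC₀⟩ := ψ.decay 0 0
  obtain ⟨C₂, hC₂pos, hC₂⟩ := ψ.decay 2 0
  have hψ_bound : ∀ w : ℝ, ‖ψ w‖ ≤ (C₀ + C₂) * g w := by
    intro w
    have h1 : ‖ψ w‖ ≤ C₀ := by
      have := hC₀ w
      simpa [norm_iteratedFDeriv_zero] using this
    have h2 : w ^ 2 * ‖ψ w‖ ≤ C₂ := by
      have := hC₂ w
      simpa [norm_iteratedFDeriv_zero, Real.norm_eq_abs, sq_abs] using this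
    have hg : 0 < 1 + w ^ 2 := by positivity
    have : (1 + w ^ 2) * ‖ψ w‖ ≤ C₀ + C₂ := by nlinarith [norm_nonneg (ψ w)]
    unfold g
    rw [← div_eq_mul_inv, le_div_iff₀ hg]
    nlinarith
  set C : ℝ := (C₀ + C₂) * (1 + (2 * Real.pi) ^ 2) with hC_def
  have hCpos : 0 < C := by positivity
  have hFT_bound : ∀ τ : ℝ, ‖FT (⇑φ) τ‖ ≤ C * g τ := by
    intro τ
    rw [hFTeq τ]
    refine (hψ_bound _).trans ?_
    have hkey : g (τ / (2 * Real.pi)) ≤ (1 + (2 * Real.pi) ^ 2) * g τ := by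
      unfold g
      rw [← one_div (1 + (τ / (2 * Real.pi)) ^ 2), ← one_div (1 + τ ^ 2), mul_one_div,
        div_le_div_iff₀ (by positivity) (by positivity)]
      have h4 : (τ / (2 * Real.pi)) ^ 2 * (2 * Real.pi) ^ 2 = τ ^ 2 := by
        field_simp
      nlinarith [sq_nonneg (τ / (2 * Real.pi)), sq_nonneg (2 * Real.pi)]
    calc (C₀ + C₂) * g (τ / (2 * Real.pi))
        ≤ (C₀ + C₂) * ((1 + (2 * Real.pi) ^ 2) * g τ) :=
          mul_le_mul_of_nonneg_left hkey (by positivity)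
      _ = C * g τ := by rw [hC_def]; ring
  -- the dominating constant
  set K : ℝ := M ^ 2 * C * (1 + (ε ^ 2)⁻¹) / γ with hK_def
  have hKpos : 0 < K := by positivity
  -- apply domination
  refine Integrable.mono' (dom_int K) ?_ ?_
  · -- measurability
    have hamp : Measurable fun p : ℝ × ℝ => amp γ χ p.1 p.2 := by
      unfold amp
      exact ((hχ.continuous.measurable.comp measurable_fst).mul
        (hχ.continuous.measurable.comp (measurable_snd.div_const γ))).div
        ((measurable_const.mul measurable_fst.abs).mul measurable_snd.abs)
    have h1 : AEStronglyMeasurable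
        (fun p : ℝ × ℝ => ((amp γ χ p.1 p.2 : ℝ) : ℂ)) volume :=
      (Complex.continuous_ofReal.measurable.comp hamp).aestronglyMeasurable
    have h2 : Continuous fun p : ℝ × ℝ => FT (⇑φ) (|p.2| - |p.1|) :=
      hψcont.comp ((continuous_snd.abs.sub continuous_fst.abs))
    exact h1.mul h2.aestronglyMeasurable
  · -- the pointwise bound
    refine Filter.Eventually.of_forall fun p => ?_
    obtain ⟨ξ, η⟩ := p
    simp only
    by_cases hξ : |ξ| < δ
    · rw [show amp γ χ ξ η = 0 by unfold amp; rw [h0 ξ hξ]; simp]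
      simp only [Complex.ofReal_zero, zero_mul, norm_zero]
      exact mul_nonneg hKpos.le (mul_nonneg (add_nonneg (g_pos _).le (g_pos _).le)
        (add_nonneg (g_pos _).le (g_pos _).le))
    by_cases hη : |η / γ| < δ
    · rw [show amp γ χ ξ η = 0 by unfold amp; rw [h0 _ hη]; simp]
      simp only [Complex.ofReal_zero, zero_mul, norm_zero]
      exact mul_nonneg hKpos.le (mul_nonneg (add_nonneg (g_pos _).le (g_pos _).le)
        (add_nonneg (g_pos _).le (g_pos _).le))
    push_neg at hξ hη
    have hξε : ε ≤ |ξ| := (min_le_left _ _).trans hξ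
    have hηε : ε ≤ |η| := by
      have : γ * δ ≤ γ * |η / γ| := mul_le_mul_of_nonneg_left hη hγ.le
      rw [abs_div, abs_of_pos hγ, mul_div_cancel₀ _ (ne_of_gt hγ)] at this
      exact (min_le_right _ _).trans this
    have hξ0 : 0 < |ξ| := hε.trans_le hξε
    have hη0 : 0 < |η| := hε.trans_le hηε
    -- bound the amplitude
    have hamp_le : |amp γ χ ξ η| ≤ M ^ 2 / (γ * |ξ| * |η|) := by
      unfold amp
      rw [abs_div, abs_of_pos (by positivity : 0 < γ * |ξ| * |η|)]
      apply div_le_div_of_nonneg_right ?_ (by positivity)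
      rw [abs_mul]
      calc |χ ξ| * |χ (η / γ)| ≤ M * M :=
            mul_le_mul (hM ξ) (hM (η / γ)) (abs_nonneg _) (by linarith)
        _ = M ^ 2 := by ring
    have hden : (γ * |ξ| * |η|)⁻¹ ≤ (1 + (ε ^ 2)⁻¹) / γ * (g ξ + g η) := by
      have h1 : (γ * |ξ| * |η|)⁻¹ = γ⁻¹ * (|ξ| * |η|)⁻¹ := by
        rw [mul_assoc, mul_inv]
      have h2 : (|ξ| * |η|)⁻¹ ≤ (|ξ| ^ 2)⁻¹ + (|η| ^ 2)⁻¹ := inv_mul_le hξ0 hη0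
      have h3 : (|ξ| ^ 2)⁻¹ ≤ (1 + (ε ^ 2)⁻¹) * g |ξ| := inv_sq_le hε hξε
      have h4 : (|η| ^ 2)⁻¹ ≤ (1 + (ε ^ 2)⁻¹) * g |η| := inv_sq_le hε hηε
      have hgξ : g |ξ| = g ξ := g_sq _ _ (sq_abs ξ)
      have hgη : g |η| = g η := g_sq _ _ (sq_abs η)
      rw [hgξ] at h3; rw [hgη] at h4
      rw [h1]
      calc γ⁻¹ * (|ξ| * |η|)⁻¹ ≤ γ⁻¹ * ((1 + (ε ^ 2)⁻¹) * g ξ + (1 + (ε ^ 2)⁻¹) * g η) := by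
            apply mul_le_mul_of_nonneg_left _ (by positivity)
            exact h2.trans (add_le_add h3 h4)
        _ = (1 + (ε ^ 2)⁻¹) / γ * (g ξ + g η) := by field_simp
    -- put everything together
    rw [norm_mul, Complex.norm_real, Real.norm_eq_abs]
    calc |amp γ χ ξ η| * ‖FT (⇑φ) (|η| - |ξ|)‖
        ≤ (M ^ 2 / (γ * |ξ| * |η|)) * (C * g (|η| - |ξ|)) :=
          mul_le_mul hamp_le (hFT_bound _) (norm_nonneg _) (by positivity)
      _ = M ^ 2 * C * ((γ * |ξ| * |η|)⁻¹ * g (|η| - |ξ|)) := by ring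
      _ ≤ M ^ 2 * C * (((1 + (ε ^ 2)⁻¹) / γ * (g ξ + g η)) * (g (η - ξ) + g (η + ξ))) := by
          apply mul_le_mul_of_nonneg_left _ (by positivity)
          apply mul_le_mul hden (g_abs_le ξ η) (g_pos _).le
          exact mul_nonneg (by positivity) (add_nonneg (g_pos _).le (g_pos _).le)
      _ = K * ((g ξ + g η) * (g (η - ξ) + g (η + ξ))) := by rw [hK_def]; ring
end

section
/- Fix real numbers x > 0, γ > 0 and t ∈ ℝ. Let χ: ℝ → ℝ be smooth, even, identically 0 on a neighborhood of 0 and identically 1 for |ξ| ≥ 1, and set a(ξ,η) = χ(ξ)χ(η/γ)/(γ|ξ||η|) (extended by 0 where the numerator vanishes). Then the assignment φ ↦ ⟨w_{x,t}, φ⟩ := ∫∫_{ℝ²} e^{−i( t|η| + x(ξ − η/γ) )} a(ξ,η) 𝓕φ(|η| − |ξ|) dξ dη is well defined (the integrand is absolutely integrable for every Schwartz φ) and defines a tempered distribution w_{x,t} ∈ 𝓢′(ℝ), i.e., a continuous linear functional on the Schwartz space 𝓢(ℝ). -/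
open MeasureTheory

/-- The integrand of the pairing `⟨w_{x,t}, φ⟩`. -/
noncomputable def wIntegrand (x γ t : ℝ) (χ : ℝ → ℝ) (φ : SchwartzMap ℝ ℂ)
    (p : ℝ × ℝ) : ℂ :=
  Complex.exp (-(Complex.I * ((t * |p.2| + x * (p.1 - p.2 / γ) : ℝ) : ℂ))) *
    ((amp γ χ p.1 p.2 : ℝ) : ℂ) * FT (⇑φ) (|p.2| - |p.1|)

section Aux
open Real

noncomputable def Dker (p : ℝ × ℝ) : ℝ :=
  ((1 + |p.1|) ^ 2)⁻¹ * (((1 + |p.2 - abs p.1|) ^ 2)⁻¹ + ((1 + |p.2 + abs p.1|) ^ 2)⁻¹)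

lemma aux_int1 : Integrable (fun u : ℝ => ((1 + |u|) ^ 2)⁻¹) := by
  refine integrable_inv_one_add_sq.mono ?_ (Filter.Eventually.of_forall fun u => ?_)
  · exact (((continuous_const.add continuous_abs).pow 2).inv₀
      (fun u => by show (1 + |u|) ^ 2 ≠ 0; positivity)).aestronglyMeasurable
  · simp only [Real.norm_eq_abs]
    rw [abs_of_nonneg (show (0:ℝ) ≤ ((1 + |u|) ^ 2)⁻¹ by positivity),
      abs_of_nonneg (show (0:ℝ) ≤ (1 + u ^ 2)⁻¹ by positivity)]
    apply inv_anti₀ (by positivity)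
    nlinarith [abs_nonneg u, sq_abs u]

lemma aux_trans (c : ℝ) : Integrable (fun u : ℝ => ((1 + |u - c|) ^ 2)⁻¹) :=
  aux_int1.comp_sub_right c

lemma aux_int2 (c : ℝ → ℝ) (hc : Continuous c) :
    Integrable (fun p : ℝ × ℝ => ((1 + |p.1|) ^ 2)⁻¹ * ((1 + |p.2 - c p.1|) ^ 2)⁻¹) := by
  have hcont : Continuous fun p : ℝ × ℝ =>
      ((1 + |p.1|) ^ 2)⁻¹ * ((1 + |p.2 - c p.1|) ^ 2)⁻¹ := by
    apply Continuous.mul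
    · exact ((continuous_const.add (continuous_abs.comp continuous_fst)).pow 2).inv₀
        (fun p => by show (1 + |p.1|) ^ 2 ≠ 0; positivity)
    · exact ((continuous_const.add (continuous_abs.comp
        (continuous_snd.sub (hc.comp continuous_fst)))).pow 2).inv₀
        (fun p => by show (1 + |p.2 - c p.1|) ^ 2 ≠ 0; positivity)
  rw [Measure.volume_eq_prod, integrable_prod_iff hcont.aestronglyMeasurable]
  constructor
  · refine Filter.Eventually.of_forall fun ξ => ?_
    simpa using (aux_trans (c ξ)).const_mul (((1 + |ξ|) ^ 2)⁻¹)
  · have heq : (fun ξ : ℝ => ∫ η : ℝ, ‖((1 + |ξ|) ^ 2)⁻¹ * ((1 + |η - c ξ|) ^ 2)⁻¹‖)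
        = fun ξ : ℝ => ((1 + |ξ|) ^ 2)⁻¹ * ∫ u : ℝ, ((1 + |u|) ^ 2)⁻¹ := by
      funext ξ
      have h1 : ∀ η : ℝ, ‖((1 + |ξ|) ^ 2)⁻¹ * ((1 + |η - c ξ|) ^ 2)⁻¹‖
          = ((1 + |ξ|) ^ 2)⁻¹ * ((1 + |η - c ξ|) ^ 2)⁻¹ :=
        fun η => Real.norm_of_nonneg (by positivity)
      simp_rw [h1, integral_const_mul]
      rw [integral_sub_right_eq_self (fun u : ℝ => ((1 + |u|) ^ 2)⁻¹) (c ξ)]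
    simp only [heq]
    exact aux_int1.mul_const _

lemma Dker_integrable : Integrable Dker := by
  have h1 := aux_int2 (fun ξ => |ξ|) continuous_abs
  have h2 := aux_int2 (fun ξ => -|ξ|) continuous_abs.neg
  have he : Dker = fun p : ℝ × ℝ =>
      ((1 + |p.1|) ^ 2)⁻¹ * ((1 + |p.2 - abs p.1|) ^ 2)⁻¹
      + ((1 + |p.1|) ^ 2)⁻¹ * ((1 + |p.2 - -(abs p.1)|) ^ 2)⁻¹ := by
    funext p
    simp only [Dker, sub_neg_eq_add]
    ring
  rw [he]
  exact h1.add h2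

lemma Dker_nonneg (p : ℝ × ℝ) : 0 ≤ Dker p := by
  unfold Dker; positivity

lemma key_ineq (ξ η : ℝ) :
    ((1 + |ξ|) * (1 + |η|))⁻¹ * ((1 + |abs η - abs ξ|) ^ 3)⁻¹ ≤ Dker (ξ, η) := by
  set T := |abs η - abs ξ| with hT
  have hT0 : 0 ≤ T := abs_nonneg _
  have h1 : |ξ| ≤ |η| + T := by
    have h := le_abs_self (|ξ| - |η|)
    rw [abs_sub_comm] at h
    linarith
  have stepA : ((1 + |ξ|) * (1 + |η|))⁻¹ * ((1 + T) ^ 3)⁻¹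
      ≤ ((1 + |ξ|) ^ 2)⁻¹ * ((1 + T) ^ 2)⁻¹ := by
    rw [← mul_inv, ← mul_inv]
    apply inv_anti₀ (by positivity)
    have hA : 1 + |ξ| ≤ (1 + |η|) * (1 + T) := by nlinarith [abs_nonneg η]
    nlinarith [mul_le_mul_of_nonneg_right hA
      (show (0:ℝ) ≤ (1 + |ξ|) * (1 + T) ^ 2 by positivity), abs_nonneg ξ]
  have stepB : ((1 + T) ^ 2)⁻¹
      ≤ ((1 + |η - abs ξ|) ^ 2)⁻¹ + ((1 + |η + abs ξ|) ^ 2)⁻¹ := by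
    rcases le_or_gt 0 η with hη | hη
    · rw [hT, abs_of_nonneg hη]
      exact le_add_of_nonneg_right (by positivity)
    · have hTe : T = |η + abs ξ| := by
        rw [hT, abs_of_neg hη, show -η - |ξ| = -(η + |ξ|) by ring, abs_neg]
      rw [hTe]
      exact le_add_of_nonneg_left (by positivity)
  calc ((1 + |ξ|) * (1 + |η|))⁻¹ * ((1 + T) ^ 3)⁻¹
      ≤ ((1 + |ξ|) ^ 2)⁻¹ * ((1 + T) ^ 2)⁻¹ := stepA
    _ ≤ ((1 + |ξ|) ^ 2)⁻¹ * (((1 + |η - abs ξ|) ^ 2)⁻¹ + ((1 + |η + abs ξ|) ^ 2)⁻¹) :=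
        mul_le_mul_of_nonneg_left stepB (by positivity)
    _ = Dker (ξ, η) := rfl

lemma chi_bound {χ : ℝ → ℝ} (hχ : Continuous χ) (hχ1 : ∀ ξ : ℝ, 1 ≤ |ξ| → χ ξ = 1) :
    ∃ M : ℝ, 1 ≤ M ∧ ∀ ξ, |χ ξ| ≤ M := by
  obtain ⟨M₀, hM₀⟩ := (isCompact_Icc (a := (-1:ℝ)) (b := 1)).exists_bound_of_continuousOn
    hχ.continuousOn
  refine ⟨max M₀ 1, le_max_right _ _, fun ξ => ?_⟩
  rcases le_or_gt (|ξ|) 1 with h | h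
  · have hmem : ξ ∈ Set.Icc (-1:ℝ) 1 := by
      rw [Set.mem_Icc]; exact abs_le.mp h
    have := hM₀ ξ hmem
    rw [Real.norm_eq_abs] at this
    exact this.trans (le_max_left _ _)
  · rw [hχ1 ξ h.le]
    simpa using le_max_right M₀ 1

lemma amp_bound {γ : ℝ} (hγ : 0 < γ) {χ : ℝ → ℝ} {δ M : ℝ} (hδ : 0 < δ) (hM : 1 ≤ M)
    (h0 : ∀ ξ : ℝ, |ξ| < δ → χ ξ = 0) (hMb : ∀ ξ, |χ ξ| ≤ M) (ξ η : ℝ) :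
    |amp γ χ ξ η| ≤ (M ^ 2 * (1 + δ⁻¹) * (1 + (γ * δ)⁻¹) * γ⁻¹) * ((1 + |ξ|) * (1 + |η|))⁻¹ := by
  set C := M ^ 2 * (1 + δ⁻¹) * (1 + (γ * δ)⁻¹) * γ⁻¹ with hCdef
  have hM0 : (0:ℝ) < M := lt_of_lt_of_le one_pos hM
  have hC0 : 0 ≤ C := by positivity
  have hRnn : (0:ℝ) ≤ C * ((1 + |ξ|) * (1 + |η|))⁻¹ := mul_nonneg hC0 (by positivity)
  rcases lt_or_ge (|ξ|) δ with hξ | hξ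
  · rw [show amp γ χ ξ η = 0 by rw [amp, h0 ξ hξ, zero_mul, zero_div], abs_zero]
    exact hRnn
  rcases lt_or_ge (|η / γ|) δ with hη | hη
  · rw [show amp γ χ ξ η = 0 by rw [amp, h0 _ hη, mul_zero, zero_div], abs_zero]
    exact hRnn
  have hξ0 : 0 < |ξ| := lt_of_lt_of_le hδ hξ
  have hηγ : γ * δ ≤ |η| := by
    rw [abs_div, abs_of_pos hγ, le_div_iff₀ hγ] at hη
    linarith
  have hη0 : 0 < |η| := lt_of_lt_of_le (by positivity) hηγ
  have h1 : |amp γ χ ξ η| ≤ M ^ 2 / (γ * |ξ| * |η|) := by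
    rw [amp, abs_div, abs_of_pos (show (0:ℝ) < γ * |ξ| * |η| by positivity)]
    gcongr
    · calc |χ ξ * χ (η / γ)| = |χ ξ| * |χ (η / γ)| := abs_mul _ _
        _ ≤ M * M := mul_le_mul (hMb _) (hMb _) (abs_nonneg _) hM0.le
        _ = M ^ 2 := (sq M).symm
  refine h1.trans ?_
  rw [← div_eq_mul_inv, div_le_div_iff₀ (by positivity) (by positivity)]
  have e1 : 1 + |ξ| ≤ (1 + δ⁻¹) * |ξ| := by
    have h' : 1 ≤ δ⁻¹ * |ξ| := by
      calc (1:ℝ) = δ⁻¹ * δ := (inv_mul_cancel₀ hδ.ne').symm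
        _ ≤ δ⁻¹ * |ξ| := mul_le_mul_of_nonneg_left hξ (inv_nonneg.2 hδ.le)
    have hr : (1 + δ⁻¹) * |ξ| = |ξ| + δ⁻¹ * |ξ| := by ring
    linarith
  have e2 : 1 + |η| ≤ (1 + (γ * δ)⁻¹) * |η| := by
    have h' : 1 ≤ (γ * δ)⁻¹ * |η| := by
      calc (1:ℝ) = (γ * δ)⁻¹ * (γ * δ) := (inv_mul_cancel₀ (by positivity)).symm
        _ ≤ (γ * δ)⁻¹ * |η| := mul_le_mul_of_nonneg_left hηγ (by positivity)
    have hr : (1 + (γ * δ)⁻¹) * |η| = |η| + (γ * δ)⁻¹ * |η| := by ring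
    linarith
  calc M ^ 2 * ((1 + |ξ|) * (1 + |η|))
      ≤ M ^ 2 * (((1 + δ⁻¹) * |ξ|) * ((1 + (γ * δ)⁻¹) * |η|)) := by
        apply mul_le_mul_of_nonneg_left
          (mul_le_mul e1 e2 (by positivity) (by positivity)) (by positivity)
    _ = C * (γ * |ξ| * |η|) := by
        rw [hCdef]; field_simp

lemma FT_eq (φ : ℝ → ℂ) (τ : ℝ) :
    FT φ τ = FourierTransform.fourier φ (τ / (2 * π)) := by
  rw [Real.fourier_real_eq_integral_exp_smul]
  unfold FT
  refine integral_congr_ae (Filter.Eventually.of_forall fun s => ?_)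
  simp only [smul_eq_mul]
  congr 1
  rw [show -2 * π * s * (τ / (2 * π)) = -(s * τ) by field_simp]
  push_cast
  ring

lemma norm_exp_I (r : ℝ) : ‖Complex.exp (-(Complex.I * (r : ℂ)))‖ = 1 := by
  rw [Complex.norm_exp]
  simp [Complex.mul_re]

/-- Decay bound for a Schwartz function, from `one_add_le_sup_seminorm_apply`. -/
lemma schwartz_decay (ψ : SchwartzMap ℝ ℂ) (u : ℝ) :
    ‖ψ u‖ ≤ (2 ^ 3 * ((Finset.Iic ((3, 0) : ℕ × ℕ)).sup
      (schwartzSeminormFamily ℂ ℝ ℂ)) ψ) * ((1 + |u|) ^ 3)⁻¹ := by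
  have h := SchwartzMap.one_add_le_sup_seminorm_apply (𝕜 := ℂ) (m := ((3, 0) : ℕ × ℕ))
    le_rfl le_rfl ψ u
  rw [norm_iteratedFDeriv_zero, Real.norm_eq_abs] at h
  rw [mul_comm, ← div_eq_inv_mul, le_div_iff₀ (by positivity), mul_comm]
  exact h

end Aux


/-- The assignment
`φ ↦ ∫∫ e^{-i(t|η| + x(ξ - η/γ))} a(ξ,η) 𝓕φ(|η|-|ξ|) dξ dη`
is well defined (the integrand is absolutely integrable for every Schwartz `φ`) and
defines a tempered distribution `w_{x,t}`, i.e., a continuous linear functional on `𝓢(ℝ)`. -/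
theorem w_is_tempered_distribution (x γ t : ℝ) (hx : 0 < x) (hγ : 0 < γ)
    (χ : ℝ → ℝ)
    (hχ : ContDiff ℝ (⊤ : ℕ∞) χ) (hχeven : ∀ ξ : ℝ, χ (-ξ) = χ ξ)
    (hχ0 : ∃ δ > (0 : ℝ), ∀ ξ : ℝ, |ξ| < δ → χ ξ = 0)
    (hχ1 : ∀ ξ : ℝ, 1 ≤ |ξ| → χ ξ = 1) :
    (∀ φ : SchwartzMap ℝ ℂ, Integrable (wIntegrand x γ t χ φ)) ∧
    (∃ w : SchwartzMap ℝ ℂ →L[ℂ] ℂ, ∀ φ : SchwartzMap ℝ ℂ,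
      w φ = ∫ p : ℝ × ℝ, wIntegrand x γ t χ φ p) := by
  classical
  obtain ⟨δ, hδ, h0⟩ := hχ0
  obtain ⟨M, hM1, hMb⟩ := chi_bound hχ.continuous hχ1
  set C₁ : ℝ := M ^ 2 * (1 + δ⁻¹) * (1 + (γ * δ)⁻¹) * γ⁻¹ with hC₁def
  have hM0 : (0:ℝ) < M := lt_of_lt_of_le one_pos hM1
  have hC₁ : 0 ≤ C₁ := by positivity
  have hamp : ∀ ξ η : ℝ, |amp γ χ ξ η| ≤ C₁ * ((1 + |ξ|) * (1 + |η|))⁻¹ :=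
    amp_bound hγ hδ hM1 h0 hMb
  -- the kernel and phase
  set K : ℝ × ℝ → ℂ := fun p =>
    Complex.exp (-(Complex.I * ((t * |p.2| + x * (p.1 - p.2 / γ) : ℝ) : ℂ))) *
      ((amp γ χ p.1 p.2 : ℝ) : ℂ) with hK
  set g : ℝ × ℝ → ℝ := fun p => (|p.2| - |p.1|) / (2 * Real.pi) with hg
  have hgcont : Continuous g := by
    apply Continuous.div_const
    exact (continuous_abs.comp continuous_snd).sub (continuous_abs.comp continuous_fst)
  have hKnorm : ∀ p : ℝ × ℝ, ‖K p‖ = |amp γ χ p.1 p.2| := by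
    intro p
    rw [hK, norm_mul, norm_exp_I, one_mul, Complex.norm_real, Real.norm_eq_abs]
  have hKm : AEStronglyMeasurable K (volume : Measure (ℝ × ℝ)) := by
    apply AEStronglyMeasurable.mul
    · apply Continuous.aestronglyMeasurable
      apply Complex.continuous_exp.comp
      apply Continuous.neg
      apply continuous_const.mul
      apply Complex.continuous_ofReal.comp
      exact (continuous_const.mul (continuous_abs.comp continuous_snd)).add
        (continuous_const.mul (continuous_fst.sub (continuous_snd.div_const γ)))
    · apply Measurable.aestronglyMeasurable
      apply Complex.measurable_ofReal.comp
      apply Measurable.div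
      · exact ((hχ.continuous.comp continuous_fst).mul
          (hχ.continuous.comp (continuous_snd.div_const γ))).measurable
      · exact (continuous_const.mul ((continuous_abs.comp continuous_fst)) |>.mul
          (continuous_abs.comp continuous_snd)).measurable
  -- seminorm
  set S : SchwartzMap ℝ ℂ → ℝ := fun ψ =>
    ((Finset.Iic ((3, 0) : ℕ × ℕ)).sup (schwartzSeminormFamily ℂ ℝ ℂ)) ψ with hSdef
  have hS0 : ∀ ψ, 0 ≤ S ψ := fun ψ => apply_nonneg _ _
  set c₂ : ℝ := 2 ^ 3 * (2 * Real.pi) ^ 3 * C₁ with hc₂def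
  have hc₂ : 0 ≤ c₂ := by positivity
  -- pointwise bound
  have hptb : ∀ (ψ : SchwartzMap ℝ ℂ) (p : ℝ × ℝ),
      ‖K p * ψ (g p)‖ ≤ (c₂ * S ψ) * Dker p := by
    intro ψ p
    obtain ⟨ξ, η⟩ := p
    have hgabs : |g (ξ, η)| = |abs η - abs ξ| / (2 * Real.pi) := by
      rw [hg]
      rw [abs_div, abs_of_pos (by positivity : (0:ℝ) < 2 * Real.pi)]
    set T : ℝ := |abs η - abs ξ| with hTdef
    have hT0 : (0:ℝ) ≤ T := abs_nonneg _
    have hTg : 1 + T ≤ (2 * Real.pi) * (1 + |g (ξ, η)|) := by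
      rw [hgabs, mul_add, mul_one, mul_div_cancel₀ _ (by positivity : (2 * Real.pi) ≠ 0)]
      have := Real.pi_gt_three
      linarith
    have h3 : ((1 + |g (ξ, η)|) ^ 3)⁻¹ ≤ (2 * Real.pi) ^ 3 * ((1 + T) ^ 3)⁻¹ := by
      rw [← div_eq_mul_inv, le_div_iff₀ (by positivity), inv_mul_eq_div,
        div_le_iff₀ (by positivity)]
      calc (1 + T) ^ 3 ≤ ((2 * Real.pi) * (1 + |g (ξ, η)|)) ^ 3 :=
            pow_le_pow_left₀ (by positivity) hTg 3
        _ = (2 * Real.pi) ^ 3 * (1 + |g (ξ, η)|) ^ 3 := by ring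
    have hKb : ‖K (ξ, η)‖ ≤ C₁ * ((1 + |ξ|) * (1 + |η|))⁻¹ := by
      rw [hKnorm]; exact hamp ξ η
    have hψb : ‖ψ (g (ξ, η))‖ ≤ 2 ^ 3 * S ψ * ((2 * Real.pi) ^ 3 * ((1 + T) ^ 3)⁻¹) := by
      refine (schwartz_decay ψ (g (ξ, η))).trans ?_
      exact mul_le_mul_of_nonneg_left h3 (by positivity)
    calc ‖K (ξ, η) * ψ (g (ξ, η))‖ = ‖K (ξ, η)‖ * ‖ψ (g (ξ, η))‖ := norm_mul _ _
      _ ≤ (C₁ * ((1 + |ξ|) * (1 + |η|))⁻¹) *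
          (2 ^ 3 * S ψ * ((2 * Real.pi) ^ 3 * ((1 + T) ^ 3)⁻¹)) := by
          apply mul_le_mul hKb hψb (norm_nonneg _)
          exact mul_nonneg hC₁ (by positivity)
      _ = (c₂ * S ψ) * (((1 + |ξ|) * (1 + |η|))⁻¹ * ((1 + T) ^ 3)⁻¹) := by
          rw [hc₂def]; ring
      _ ≤ (c₂ * S ψ) * Dker (ξ, η) := by
          apply mul_le_mul_of_nonneg_left (key_ineq ξ η)
          exact mul_nonneg hc₂ (hS0 ψ)
  -- integrability
  have hInt : ∀ ψ : SchwartzMap ℝ ℂ, Integrable (fun p : ℝ × ℝ => K p * ψ (g p)) := by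
    intro ψ
    refine (Dker_integrable.const_mul (c₂ * S ψ)).mono'
      (hKm.mul (ψ.continuous.comp hgcont).aestronglyMeasurable)
      (Filter.Eventually.of_forall (hptb ψ))
  -- identification of the integrand
  have hI : ∀ φ : SchwartzMap ℝ ℂ, wIntegrand x γ t χ φ =
      fun p : ℝ × ℝ => K p * (SchwartzMap.fourierTransformCLM ℂ φ) (g p) := by
    intro φ
    funext p
    rw [wIntegrand, SchwartzMap.fourierTransformCLM_apply, hK, hg]
    rw [FT_eq (⇑φ) (|p.2| - |p.1|)]
    rfl
  -- the CLM
  set A : SchwartzMap ℝ ℂ → ℂ := fun ψ => ∫ p : ℝ × ℝ, K p * ψ (g p) with hA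
  have hadd : ∀ f f' : SchwartzMap ℝ ℂ, A (f + f') = A f + A f' := by
    intro f f'
    rw [hA]
    simp only [SchwartzMap.add_apply, mul_add]
    exact integral_add (hInt f) (hInt f')
  have hsmul : ∀ (a : ℂ) (f : SchwartzMap ℝ ℂ), A (a • f) = a • A f := by
    intro a f
    rw [hA]
    simp only [SchwartzMap.smul_apply, smul_eq_mul]
    rw [← integral_const_mul]
    congr 1
    funext p
    ring
  have hDnn : (0:ℝ) ≤ ∫ p : ℝ × ℝ, Dker p := integral_nonneg Dker_nonneg
  have hbound : ∀ ψ : SchwartzMap ℝ ℂ,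
      ‖A ψ‖ ≤ (c₂ * ∫ p : ℝ × ℝ, Dker p) *
        ((Finset.Iic ((3, 0) : ℕ × ℕ)).sup (schwartzSeminormFamily ℂ ℝ ℂ)) ψ := by
    intro ψ
    calc ‖A ψ‖ ≤ ∫ p : ℝ × ℝ, ‖K p * ψ (g p)‖ := norm_integral_le_integral_norm _
      _ ≤ ∫ p : ℝ × ℝ, (c₂ * S ψ) * Dker p := by
          apply integral_mono (hInt ψ).norm (Dker_integrable.const_mul _) (hptb ψ)
      _ = (c₂ * ∫ p : ℝ × ℝ, Dker p) * S ψ := by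
          rw [integral_const_mul]; ring
  set L : SchwartzMap ℝ ℂ →L[ℂ] ℂ :=
    SchwartzMap.mkCLMtoNormedSpace A hadd hsmul
      ⟨Finset.Iic ((3, 0) : ℕ × ℕ), c₂ * ∫ p : ℝ × ℝ, Dker p,
        mul_nonneg hc₂ hDnn, hbound⟩ with hL
  refine ⟨fun φ => ?_, ⟨L.comp (SchwartzMap.fourierTransformCLM ℂ), fun φ => ?_⟩⟩
  · rw [show wIntegrand x γ t χ φ = fun p : ℝ × ℝ =>
      K p * (SchwartzMap.fourierTransformCLM ℂ φ) (g p) from hI φ]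
    exact hInt _
  · rw [ContinuousLinearMap.comp_apply]
    have : L (SchwartzMap.fourierTransformCLM ℂ φ) = A (SchwartzMap.fourierTransformCLM ℂ φ) := rfl
    rw [this, hA, show wIntegrand x γ t χ φ = fun p : ℝ × ℝ =>
      K p * (SchwartzMap.fourierTransformCLM ℂ φ) (g p) from hI φ]
end

section
/- Fix x > 0, γ > 0 and t ∈ ℝ, and let χ and a be as follows: χ: ℝ → ℝ smooth, even, identically 0 near 0 and identically 1 for |ξ| ≥ 1; a(ξ,η) = χ(ξ)χ(η/γ)/(γ|ξ||η|) (extended by 0). Then the function G: ℝ → ℂ defined by G(r) = 4π e^{itr} ∫_{{ξ : |ξ| ≥ r}} e^{−i( xξ + t|ξ| )} cos( (x/γ)(|ξ| − r) ) a(ξ, |ξ| − r) dξ is well defined (the integrand is absolutely integrable for each r) and is continuous on ℝ. -/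
set_option maxHeartbeats 1000000

open MeasureTheory

/-- The function
`G(r) = 4π e^{itr} ∫_{|ξ| ≥ r} e^{-i(xξ + t|ξ|)} cos((x/γ)(|ξ|-r)) a(ξ,|ξ|-r) dξ`
is well defined (the integrand is absolutely integrable for every `r`) and continuous. -/
theorem Gfun_welldefined_continuous (x γ t : ℝ) (hx : 0 < x) (hγ : 0 < γ)
    (χ : ℝ → ℝ)
    (hχ : ContDiff ℝ (⊤ : ℕ∞) χ) (hχeven : ∀ ξ : ℝ, χ (-ξ) = χ ξ)
    (hχ0 : ∃ δ > (0 : ℝ), ∀ ξ : ℝ, |ξ| < δ → χ ξ = 0)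
    (hχ1 : ∀ ξ : ℝ, 1 ≤ |ξ| → χ ξ = 1) :
    (∀ r : ℝ, IntegrableOn
      (fun ξ : ℝ =>
        Complex.exp (-(Complex.I * ((x * ξ + t * |ξ| : ℝ) : ℂ))) *
          ((Real.cos (x / γ * (|ξ| - r)) : ℝ) : ℂ) *
          ((amp γ χ ξ (|ξ| - r) : ℝ) : ℂ))
      {ξ : ℝ | r ≤ |ξ|}) ∧
    Continuous (fun r : ℝ =>
      ((4 * Real.pi : ℝ) : ℂ) * Complex.exp (Complex.I * (t : ℂ) * (r : ℂ)) *
        ∫ ξ in {ξ : ℝ | r ≤ |ξ|},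
          Complex.exp (-(Complex.I * ((x * ξ + t * |ξ| : ℝ) : ℂ))) *
            ((Real.cos (x / γ * (|ξ| - r)) : ℝ) : ℂ) *
            ((amp γ χ ξ (|ξ| - r) : ℝ) : ℂ)) := by
  classical
  obtain ⟨δ, hδ : 0 < δ, hδ0⟩ := hχ0
  -- global bound on χ
  obtain ⟨M0, hM0⟩ := (isCompact_Icc (a := (-1:ℝ)) (b := 1)).exists_bound_of_continuousOn
    hχ.continuous.continuousOn
  set M : ℝ := max M0 1 with hMdef
  have hM1 : (1:ℝ) ≤ M := le_max_right _ _
  have hMpos : (0:ℝ) < M := lt_of_lt_of_le one_pos hM1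
  have hMbd : ∀ s : ℝ, |χ s| ≤ M := by
    intro s
    rcases le_or_gt (|s|) 1 with h | h
    · have hmem : s ∈ Set.Icc (-1:ℝ) 1 := by
        rw [Set.mem_Icc]; exact abs_le.mp h
      calc |χ s| ≤ M0 := by simpa [Real.norm_eq_abs] using hM0 s hmem
        _ ≤ M := le_max_left _ _
    · rw [hχ1 s h.le]; simpa using hM1
  have hχzero : χ 0 = 0 := hδ0 0 (by simpa using hδ)
  -- the regularized quotient u
  set u : ℝ → ℝ := fun s => χ s / |s| with hudef
  have hucont : Continuous u := by
    rw [continuous_iff_continuousAt]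
    intro s
    rcases eq_or_ne s 0 with rfl | hs
    · have hev : ∀ᶠ y in nhds (0:ℝ), u y = 0 := by
        filter_upwards [Metric.ball_mem_nhds (0:ℝ) hδ] with y hy
        have : |y| < δ := by simpa [Real.dist_eq] using hy
        simp [hudef, hδ0 y this]
      have hev' : u =ᶠ[nhds (0:ℝ)] fun _ => (0:ℝ) := hev
      exact ContinuousAt.congr (continuousAt_const) hev'.symm
    · exact (hχ.continuous.continuousAt).div (continuous_abs.continuousAt) (by simpa using hs)
  have hu_bd : ∀ s : ℝ, |u s| ≤ M / δ := by
    intro s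
    rcases lt_or_ge (|s|) δ with h | h
    · rw [hudef]; simp only [hδ0 s h, zero_div, abs_zero]; positivity
    · rw [hudef]; simp only [abs_div, abs_abs]
      exact div_le_div₀ hMpos.le (hMbd s) hδ h
  have hu_div : ∀ s : ℝ, |u s| ≤ M / |s| := by
    intro s
    rcases eq_or_ne s 0 with rfl | hs
    · simp [hudef, hχzero]
    · rw [hudef]; simp only [abs_div, abs_abs]
      exact div_le_div₀ hMpos.le (hMbd s) (abs_pos.mpr hs) le_rfl
  -- rewrite of amp via u
  have hamp_eq : ∀ ξ η : ℝ, amp γ χ ξ η = u ξ * u (η / γ) / γ ^ 2 := by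
    intro ξ η
    rcases eq_or_ne ξ 0 with rfl | hξ
    · simp [amp, hudef, hχzero]
    · rcases eq_or_ne η 0 with rfl | hη
      · simp [amp, hudef, hχzero]
      · have h1 : |ξ| ≠ 0 := abs_ne_zero.mpr hξ
        have h2 : |η| ≠ 0 := abs_ne_zero.mpr hη
        have h3 : |η / γ| = |η| / γ := by
          rw [abs_div, abs_of_pos hγ]
        rw [amp, hudef]
        simp only [h3]
        field_simp
  have hamp_cont : Continuous fun p : ℝ × ℝ => amp γ χ p.1 p.2 := by
    have heq : (fun p : ℝ × ℝ => amp γ χ p.1 p.2)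
        = fun p : ℝ × ℝ => u p.1 * u (p.2 / γ) / γ ^ 2 := by
      funext p; exact hamp_eq p.1 p.2
    rw [heq]
    exact ((hucont.comp continuous_fst).mul
      (hucont.comp (continuous_snd.div_const γ))).div_const _
  -- bounds on amp
  have hγ2 : (0:ℝ) < γ ^ 2 := by positivity
  have hamp_bd1 : ∀ ξ η : ℝ, |amp γ χ ξ η| ≤ (M / δ) * (M / δ) / γ ^ 2 := by
    intro ξ η
    rw [hamp_eq, abs_div, abs_of_pos hγ2, abs_mul]
    gcongr
    · exact hu_bd ξ
    · exact hu_bd _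
  have hamp_bd2 : ∀ ξ η : ℝ, |amp γ χ ξ η| ≤ (M / |ξ|) * (M * γ / |η|) / γ ^ 2 := by
    intro ξ η
    rw [hamp_eq, abs_div, abs_of_pos hγ2, abs_mul]
    have h2 : |u (η / γ)| ≤ M * γ / |η| := by
      have h3 : |η / γ| = |η| / γ := by rw [abs_div, abs_of_pos hγ]
      have h4 := hu_div (η / γ)
      rw [h3, div_div_eq_mul_div] at h4
      exact h4
    have hnum : |u ξ| * |u (η / γ)| ≤ M / |ξ| * (M * γ / |η|) :=
      mul_le_mul (hu_div ξ) h2 (abs_nonneg _) (by positivity)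
    exact div_le_div₀ (by positivity) hnum hγ2 le_rfl
  -- the cutoff ψ
  set ψ : ℝ → ℝ := fun s => min 1 (max 0 (s / (δ * γ))) with hψdef
  have hδγ : (0:ℝ) < δ * γ := mul_pos hδ hγ
  have hψcont : Continuous ψ := by
    apply continuous_const.min
    exact continuous_const.max (continuous_id.div_const _)
  have hψ0 : ∀ s : ℝ, s ≤ 0 → ψ s = 0 := by
    intro s hs
    have h1 : s / (δ * γ) ≤ 0 := div_nonpos_of_nonpos_of_nonneg hs hδγ.le
    rw [hψdef]
    simp only [max_eq_left h1, min_eq_right (zero_le_one)]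
  have hψ1 : ∀ s : ℝ, δ * γ ≤ s → ψ s = 1 := by
    intro s hs
    have h1 : (1:ℝ) ≤ s / (δ * γ) := (one_le_div hδγ).mpr hs
    rw [hψdef]
    simp only [max_eq_right (le_trans zero_le_one h1), min_eq_left h1]
  have hψ01 : ∀ s : ℝ, |ψ s| ≤ 1 := by
    intro s
    have h0 : (0:ℝ) ≤ ψ s := le_min zero_le_one (le_max_left _ _)
    rw [abs_of_nonneg h0]
    exact min_le_left _ _
  -- the integrand and its regularized version
  set orig : ℝ → ℝ → ℂ := fun r ξ =>
    Complex.exp (-(Complex.I * ((x * ξ + t * |ξ| : ℝ) : ℂ))) *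
      ((Real.cos (x / γ * (|ξ| - r)) : ℝ) : ℂ) *
      ((amp γ χ ξ (|ξ| - r) : ℝ) : ℂ) with horig
  set F : ℝ → ℝ → ℂ := fun r ξ => orig r ξ * ((ψ (|ξ| - r) : ℝ) : ℂ) with hFdef
  have hind : ∀ r ξ : ℝ, Set.indicator {ξ : ℝ | r ≤ |ξ|} (orig r) ξ = F r ξ := by
    intro r ξ
    by_cases h : r ≤ |ξ|
    · rw [Set.indicator_of_mem (show ξ ∈ {ξ : ℝ | r ≤ |ξ|} from h)]
      by_cases h2 : δ * γ ≤ |ξ| - r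
      · rw [hFdef]; simp only [hψ1 _ h2]; simp
      · have hnn : 0 ≤ |ξ| - r := sub_nonneg.mpr h
        have habs : |(|ξ| - r) / γ| < δ := by
          rw [abs_div, abs_of_pos hγ, abs_of_nonneg hnn, div_lt_iff₀ hγ]
          nlinarith [not_le.mp h2]
        have hz : amp γ χ ξ (|ξ| - r) = 0 := by
          rw [amp, hδ0 _ habs]; simp
        rw [hFdef, horig]
        simp [hz]
    · rw [Set.indicator_of_notMem (show ξ ∉ {ξ : ℝ | r ≤ |ξ|} from h)]
      have hψz : ψ (|ξ| - r) = 0 := hψ0 _ (by push_neg at h; linarith)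
      simp [hFdef, hψz]
  -- norm bound on F by |amp|
  have hexp_norm : ∀ c : ℝ, ‖Complex.exp (-(Complex.I * (c : ℂ)))‖ = 1 := by
    intro c
    rw [Complex.norm_exp]
    simp
  have hF_norm : ∀ r ξ : ℝ, ‖F r ξ‖ ≤ |amp γ χ ξ (|ξ| - r)| := by
    intro r ξ
    rw [hFdef, horig]
    simp only [norm_mul, hexp_norm, Complex.norm_real, Real.norm_eq_abs, one_mul]
    calc |Real.cos (x / γ * (|ξ| - r))| * |amp γ χ ξ (|ξ| - r)| * |ψ (|ξ| - r)|
        ≤ 1 * |amp γ χ ξ (|ξ| - r)| * 1 := by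
          gcongr
          · exact Real.abs_cos_le_one _
          · exact hψ01 _
      _ = |amp γ χ ξ (|ξ| - r)| := by ring
  -- continuity of F in ξ and in r
  have hFcont : ∀ r : ℝ, Continuous (F r) := by
    intro r
    rw [hFdef, horig]
    apply Continuous.mul
    apply Continuous.mul
    apply Continuous.mul
    · exact Complex.continuous_exp.comp
        ((continuous_const.mul (Complex.continuous_ofReal.comp
          ((continuous_const.mul continuous_id).add
            (continuous_const.mul continuous_abs)))).neg)
    · exact Complex.continuous_ofReal.comp
        (Real.continuous_cos.comp (continuous_const.mul (continuous_abs.sub continuous_const)))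
    · exact Complex.continuous_ofReal.comp
        (hamp_cont.comp (continuous_id.prodMk (continuous_abs.sub continuous_const)))
    · exact Complex.continuous_ofReal.comp
        (hψcont.comp (continuous_abs.sub continuous_const))
  have hFcont_r : ∀ ξ : ℝ, Continuous fun r => F r ξ := by
    intro ξ
    rw [hFdef, horig]
    apply Continuous.mul
    apply Continuous.mul
    apply Continuous.mul
    · exact continuous_const
    · exact Complex.continuous_ofReal.comp
        (Real.continuous_cos.comp (continuous_const.mul (continuous_const.sub continuous_id)))
    · exact Complex.continuous_ofReal.comp
        (hamp_cont.comp (continuous_const.prodMk (continuous_const.sub continuous_id)))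
    · exact Complex.continuous_ofReal.comp
        (hψcont.comp (continuous_const.sub continuous_id))
  -- the uniform dominating bound near any r₀
  have key : ∀ r₀ : ℝ, ∃ C : ℝ, ∀ r ξ : ℝ, |r - r₀| ≤ 1 → ‖F r ξ‖ ≤ C / (1 + ξ ^ 2) := by
    intro r₀
    set L : ℝ := 2 * |r₀| + 2 with hLdef
    have hL2 : (2:ℝ) ≤ L := by
      have := abs_nonneg r₀; rw [hLdef]; linarith
    set Cmax : ℝ := (M / δ) * (M / δ) / γ ^ 2 with hCmax
    set Ctail : ℝ := 4 * M ^ 2 / γ with hCtail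
    refine ⟨max (Cmax * (1 + L ^ 2)) Ctail, fun r ξ hr => ?_⟩
    have h1ξ : (0:ℝ) < 1 + ξ ^ 2 := by positivity
    rcases le_or_gt (|ξ|) L with h | h
    · calc ‖F r ξ‖ ≤ |amp γ χ ξ (|ξ| - r)| := hF_norm r ξ
        _ ≤ Cmax := hamp_bd1 ξ _
        _ ≤ Cmax * (1 + L ^ 2) / (1 + ξ ^ 2) := by
            rw [le_div_iff₀ h1ξ]
            have hsq : ξ ^ 2 ≤ L ^ 2 := by
              have := sq_abs ξ
              nlinarith [abs_nonneg ξ]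
            have hCm : (0:ℝ) ≤ Cmax := by rw [hCmax]; positivity
            nlinarith
        _ ≤ max (Cmax * (1 + L ^ 2)) Ctail / (1 + ξ ^ 2) := by
            gcongr
            exact le_max_left _ _
    · -- tail estimate
      have hξpos : (0:ℝ) < |ξ| := lt_of_lt_of_le (by linarith) h.le
      have hrabs : |r| ≤ |r₀| + 1 := by
        calc |r| = |(r - r₀) + r₀| := by ring_nf
          _ ≤ |r - r₀| + |r₀| := abs_add_le _ _
          _ ≤ |r₀| + 1 := by linarith
      have hhalf : |ξ| / 2 ≤ |(|ξ| - r)| := by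
        have h1 : |ξ| - r ≥ |ξ| - |r| := by
          have := le_abs_self r; linarith
        have h2 : |ξ| - |r| ≥ |ξ| / 2 := by
          rw [hLdef] at h; linarith
        calc |ξ| / 2 ≤ |ξ| - r := by linarith
          _ ≤ |(|ξ| - r)| := le_abs_self _
      calc ‖F r ξ‖ ≤ |amp γ χ ξ (|ξ| - r)| := hF_norm r ξ
        _ ≤ (M / |ξ|) * (M * γ / |(|ξ| - r)|) / γ ^ 2 := hamp_bd2 ξ _
        _ ≤ (M / |ξ|) * (M * γ / (|ξ| / 2)) / γ ^ 2 := by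
            have h1 : M * γ / |(|ξ| - r)| ≤ M * γ / (|ξ| / 2) :=
              div_le_div_of_nonneg_left (by positivity) (by positivity) hhalf
            have h2 := mul_le_mul_of_nonneg_left h1 (by positivity : (0:ℝ) ≤ M / |ξ|)
            exact div_le_div₀ (by positivity) h2 hγ2 le_rfl
        _ = (2 * M ^ 2 / γ) / (|ξ|) ^ 2 := by
            have calcEq : ∀ A : ℝ, 0 < A →
                (M / A) * (M * γ / (A / 2)) / γ ^ 2 = (2 * M ^ 2 / γ) / A ^ 2 := by
              intro A hA
              field_simp
            exact calcEq (|ξ|) hξpos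
        _ ≤ Ctail / (1 + ξ ^ 2) := by
            rw [div_le_div_iff₀ (by positivity) h1ξ, hCtail]
            have hsq : |ξ| ^ 2 = ξ ^ 2 := sq_abs ξ
            have h4 : (4:ℝ) ≤ ξ ^ 2 := by nlinarith
            rw [hsq]
            have hK : (0:ℝ) < M ^ 2 / γ := by positivity
            have expand1 : 2 * M ^ 2 / γ * (1 + ξ ^ 2) = 2 * (M ^ 2 / γ) * (1 + ξ ^ 2) := by ring
            have expand2 : 4 * M ^ 2 / γ * ξ ^ 2 = 4 * (M ^ 2 / γ) * ξ ^ 2 := by ring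
            rw [expand1, expand2]
            nlinarith
        _ ≤ max (Cmax * (1 + L ^ 2)) Ctail / (1 + ξ ^ 2) := by
            gcongr
            exact le_max_right _ _
  -- integrability of the dominating bound
  have hbound_int : ∀ C : ℝ, Integrable (fun ξ : ℝ => C / (1 + ξ ^ 2)) := by
    intro C
    have := integrable_inv_one_add_sq.const_mul C
    simpa [div_eq_mul_inv] using this
  -- integrability of F r
  have hFint : ∀ r : ℝ, Integrable (F r) := by
    intro r
    obtain ⟨C, hbd⟩ := key r
    exact (hbound_int C).mono' (hFcont r).aestronglyMeasurable
      (Filter.Eventually.of_forall fun ξ => hbd r ξ (by simp))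
  have hmeasS : ∀ r : ℝ, MeasurableSet {ξ : ℝ | r ≤ |ξ|} := fun r =>
    measurableSet_le measurable_const continuous_abs.measurable
  constructor
  · -- part 1: integrability on the set
    intro r
    have h1 : Integrable (Set.indicator {ξ : ℝ | r ≤ |ξ|} (orig r)) := by
      have heq : Set.indicator {ξ : ℝ | r ≤ |ξ|} (orig r) = F r := funext (hind r)
      rw [heq]; exact hFint r
    exact (integrable_indicator_iff (hmeasS r)).mp h1
  · -- part 2: continuity
    have hGint : ∀ r : ℝ, (∫ ξ in {ξ : ℝ | r ≤ |ξ|}, orig r ξ) = ∫ ξ, F r ξ := by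
      intro r
      rw [← integral_indicator (hmeasS r)]
      congr 1
      funext ξ
      exact hind r ξ
    have hrw : (fun r : ℝ =>
        ((4 * Real.pi : ℝ) : ℂ) * Complex.exp (Complex.I * (t : ℂ) * (r : ℂ)) *
          ∫ ξ in {ξ : ℝ | r ≤ |ξ|}, orig r ξ)
        = fun r : ℝ =>
        ((4 * Real.pi : ℝ) : ℂ) * Complex.exp (Complex.I * (t : ℂ) * (r : ℂ)) *
          ∫ ξ, F r ξ := by
      funext r; rw [hGint r]
    show Continuous (fun r : ℝ =>
      ((4 * Real.pi : ℝ) : ℂ) * Complex.exp (Complex.I * (t : ℂ) * (r : ℂ)) *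
        ∫ ξ in {ξ : ℝ | r ≤ |ξ|}, orig r ξ)
    rw [hrw]
    apply Continuous.mul
    · exact continuous_const.mul (Complex.continuous_exp.comp
        (continuous_const.mul Complex.continuous_ofReal))
    · rw [continuous_iff_continuousAt]
      intro r₀
      obtain ⟨C, hbd⟩ := key r₀
      apply continuousAt_of_dominated
        (bound := fun ξ : ℝ => C / (1 + ξ ^ 2))
      · exact Filter.Eventually.of_forall fun r => (hFcont r).aestronglyMeasurable
      · filter_upwards [Metric.ball_mem_nhds r₀ one_pos] with r hr
        exact Filter.Eventually.of_forall fun ξ =>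
          hbd r ξ (le_of_lt (by simpa [Real.dist_eq] using hr))
      · exact hbound_int C
      · exact Filter.Eventually.of_forall fun ξ => (hFcont_r ξ).continuousAt
end
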